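/- Let $(V,\langle\cdot,\cdot\rangle)$ be a real inner product space and let $X,Y\in V$ with $\|X\|<1$ and $\|Y\|<1$. If $\left\langle \frac{X}{\sqrt{1-\|X\|^2}}-\frac{Y}{\sqrt{1-\|Y\|^2}},\, X-Y\right\rangle = 0$, then $X=Y$. -/

import Mathlib

/-!
Writing `a = 1/√(1-‖X‖²)` and `b = 1/√(1-‖Y‖²)`, polarization gives
`⟪a • X - b • Y, X - Y⟫ = (a + b)/2 ‖X - Y‖² + (a - b)/2 (‖X‖² - ‖Y‖²)`.
Both weights are positive, and the second term is nonnegative because `t ↦ 1/√(1-t)` is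
increasing on `t < 1`; so a vanishing inner product forces `‖X - Y‖ = 0`.
-/

open Real Set

section InnerProduct

variable {V : Type*} [NormedAddCommGroup V] [InnerProductSpace ℝ V]

theorem real_inner_smul_sub_smul_sub (a b : ℝ) (X Y : V) :
    inner ℝ (a • X - b • Y) (X - Y)
      = (a + b) / 2 * ‖X - Y‖ ^ 2 + (a - b) / 2 * (‖X‖ ^ 2 - ‖Y‖ ^ 2) := by
  rw [norm_sub_sq_real]
  simp only [inner_sub_left, inner_sub_right, real_inner_smul_left,
    real_inner_self_eq_norm_sq, real_inner_comm Y X]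
  ring

theorem eq_of_real_inner_smul_sub_smul_sub_eq_zero {a b : ℝ} {X Y : V} (ha : 0 < a) (hb : 0 < b)
    (hab : 0 ≤ (a - b) * (‖X‖ ^ 2 - ‖Y‖ ^ 2)) (h : inner ℝ (a • X - b • Y) (X - Y) = 0) :
    X = Y := by
  rw [real_inner_smul_sub_smul_sub] at h
  have hXY : ‖X - Y‖ ^ 2 = 0 := by nlinarith [sq_nonneg ‖X - Y‖]
  rwa [sq_eq_zero_iff, norm_sub_eq_zero_iff] at hXY

end InnerProduct

theorem monotoneOn_one_div_sqrt_one_sub : MonotoneOn (fun t : ℝ ↦ 1 / √(1 - t)) (Iio 1) :=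
  fun _ _ t ht hst ↦
    one_div_le_one_div_of_le (sqrt_pos.mpr (sub_pos.mpr ht)) (sqrt_le_sqrt (by linarith))

/-- Equality case of the monotonicity of `X ↦ X/√(1-‖X‖²)`:
if the inner product vanishes, then `X = Y`. -/
theorem stmt_1 {V : Type*} [NormedAddCommGroup V] [InnerProductSpace ℝ V]
    (X Y : V) (hX : ‖X‖ < 1) (hY : ‖Y‖ < 1)
    (h : (inner ℝ ((1 / Real.sqrt (1 - ‖X‖ ^ 2)) • X - (1 / Real.sqrt (1 - ‖Y‖ ^ 2)) • Y)
      (X - Y) : ℝ) = 0) :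
    X = Y := by
  have hX2 : ‖X‖ ^ 2 < 1 := by nlinarith [norm_nonneg X]
  have hY2 : ‖Y‖ ^ 2 < 1 := by nlinarith [norm_nonneg Y]
  have hmono := (monovaryOn_id_iff.mpr monotoneOn_one_div_sqrt_one_sub).sub_mul_sub_nonneg
    (mem_Iio.mpr hY2) (mem_Iio.mpr hX2)
  refine eq_of_real_inner_smul_sub_smul_sub_eq_zero ?_ ?_ hmono h
  · have := sub_pos.mpr hX2
    positivity
  · have := sub_pos.mpr hY2
    positivity
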